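/- The Hibi algebra 𝓗 is isomorphic as a ℂ-algebra to the monoid algebra ℂ[𝓟(Γ)] of the commutative monoid 𝓟(Γ) of order-preserving maps Γ → ℤ_{≥0}; an isomorphism is given by sending the class of the variable z_C (C ∈ 𝓛) to the basis element of ℂ[𝓟(Γ)] indexed by the characteristic function χ_{S_C}. -/

import Mathlib

noncomputable section

namespace SpBranch


/-! Elements of `Fin (2*n)` carry the 1-based label `(x : ℕ) + 1`. -/

/-- The column set `I_i = {1, …, i}` (1-based labels). -/
def Iset (n i : ℕ) : Finset (Fin (2*n)) :=
  Finset.univ.filter (fun x => (x : ℕ) + 1 ≤ i)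

/-- The column set `J_j = {1, …, j} ∪ {n}` (1-based labels). -/
def Jset (n j : ℕ) : Finset (Fin (2*n)) :=
  Finset.univ.filter (fun x => (x : ℕ) + 1 ≤ j ∨ (x : ℕ) + 1 = n)

/-- The column set `J′_j = {1, …, j} ∪ {n+1}` (1-based labels). -/
def JPset (n j : ℕ) : Finset (Fin (2*n)) :=
  Finset.univ.filter (fun x => (x : ℕ) + 1 ≤ j ∨ (x : ℕ) + 1 = n + 1)

/-- The column set `K_k = {1, …, k} ∪ {n, n+1}` (1-based labels). -/
def Kset (n k : ℕ) : Finset (Fin (2*n)) :=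
  Finset.univ.filter (fun x => (x : ℕ) + 1 ≤ k ∨ (x : ℕ) + 1 = n ∨ (x : ℕ) + 1 = n + 1)

/-- The underlying set of the poset `𝓛`. -/
def LSet (n : ℕ) : Set (Finset (Fin (2*n))) :=
  {C | (∃ i, 1 ≤ i ∧ i ≤ n - 1 ∧ C = Iset n i) ∨
       (∃ j, j ≤ n - 1 ∧ C = Jset n j) ∨
       (∃ j, j ≤ n - 1 ∧ C = JPset n j) ∨
       (∃ k, k ≤ n - 2 ∧ C = Kset n k)}

/-- The generating relations of the partial order `⪯` on `𝓛`:
`J_i ⪯ J′_i ⪯ I_i ⪯ J_{i−1}`, `J′_i ⪯ K_{i−1} ⪯ J_{i−1}`, `J_{i−1} ⪯ J′_{i−1}` for `1 ≤ i ≤ n−1`. -/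
def LGen (n : ℕ) (C C' : Finset (Fin (2*n))) : Prop :=
  ∃ i, 1 ≤ i ∧ i ≤ n - 1 ∧
    ((C = Jset n i ∧ C' = JPset n i) ∨
     (C = JPset n i ∧ C' = Iset n i) ∨
     (C = JPset n i ∧ C' = Kset n (i-1)) ∨
     (C = Iset n i ∧ C' = Jset n (i-1)) ∨
     (C = Kset n (i-1) ∧ C' = Jset n (i-1)) ∨
     (C = Jset n (i-1) ∧ C' = JPset n (i-1)))

/-- The partial order `⪯` on `𝓛`, generated by `LGen`. -/
def LLE (n : ℕ) : Finset (Fin (2*n)) → Finset (Fin (2*n)) → Prop :=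
  Relation.ReflTransGen (LGen n)

/-- A multichain in `𝓛`: a finite weakly increasing sequence of elements of `𝓛`. -/
def IsMultichain (n : ℕ) (l : List (Finset (Fin (2*n)))) : Prop :=
  (∀ C ∈ l, C ∈ LSet n) ∧ l.Chain' (LLE n)

/-- `δ_C`: the minor of `X` on rows `1, …, |C|` and columns `C`. -/
def deltaFn (n : ℕ) (C : Finset (Fin (2*n))) (X : Matrix (Fin (2*n)) (Fin (2*n)) ℂ) : ℂ :=
  Matrix.det (Matrix.of fun i j : Fin C.card =>
    X (Fin.castLE (le_trans C.card_le_univ (by simp)) i) ((C.orderIsoOfFin rfl j).1))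

/-- The standard monomial `δ_Δ = δ_{C_1} ⋯ δ_{C_r}` attached to a list `Δ = (C_1, …, C_r)`. -/
def stdMonomial (n : ℕ) (l : List (Finset (Fin (2*n)))) (X : Matrix (Fin (2*n)) (Fin (2*n)) ℂ) : ℂ :=
  (l.map (fun C => deltaFn n C X)).prod

/-- `f_i = #{j : |C_j| ≥ i}` for a list of column sets. -/
def shapeF (n : ℕ) (l : List (Finset (Fin (2*n)))) (i : ℕ) : ℕ :=
  (l.map (fun C => if i ≤ C.card then 1 else 0)).sum

/-- `d_k` = total number of occurrences of the (1-based) label `k` among the entries of the `C_j`. -/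
def shapeD (n : ℕ) (l : List (Finset (Fin (2*n)))) (k : ℕ) : ℕ :=
  (l.map (fun C => if ∃ x : Fin (2*n), x ∈ C ∧ (x : ℕ) + 1 = k then 1 else 0)).sum

/-- `Δ` has shape `F/D` (with `F = (f_1, …, f_n)`, `D = (d_1, …, d_{n-1})`, read as functions
on 1-based indices). -/
def HasShape (n : ℕ) (l : List (Finset (Fin (2*n)))) (d f : ℕ → ℕ) : Prop :=
  (∀ i, 1 ≤ i → shapeF n l i = f i) ∧ (∀ k, 1 ≤ k → k ≤ n - 1 → shapeD n l k = d k)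

/-- A Young diagram with at most `m` rows, recorded as a function on 1-based indices. -/
def IsYoung (m : ℕ) (a : ℕ → ℕ) : Prop :=
  (∀ j k, 1 ≤ j → j ≤ k → a k ≤ a j) ∧ (∀ k, m < k → a k = 0)

/-- `A ⊑ B` : `b_i ≥ a_i ≥ b_{i+1}` for all `i ≥ 1`. -/
def Interlaces (a b : ℕ → ℕ) : Prop :=
  ∀ i, 1 ≤ i → a i ≤ b i ∧ b (i+1) ≤ a i

/-- The skew-symmetric Gram matrix `[[0, Q_n], [−Q_n, 0]]`. -/
def Jmat (n : ℕ) : Matrix (Fin (2*n)) (Fin (2*n)) ℂ :=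
  Matrix.of fun i j =>
    if (i : ℕ) + (j : ℕ) + 1 = 2*n then (if (i : ℕ) < n then 1 else -1) else 0

/-- `G_n = Sp_{2n}(ℂ)`, as a set of matrices. -/
def SpSet (n : ℕ) : Set (Matrix (Fin (2*n)) (Fin (2*n)) ℂ) :=
  {g | IsUnit g ∧ g.transpose * Jmat n * g = Jmat n}

/-- `U_n⁻`: lower triangular matrices in `G_n` with 1's on the diagonal. -/
def UnMinusSet (n : ℕ) : Set (Matrix (Fin (2*n)) (Fin (2*n)) ℂ) :=
  {g | g ∈ SpSet n ∧ (∀ i j : Fin (2*n), i < j → g i j = 0) ∧ (∀ i, g i i = 1)}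

/-- `U_{n−1}`: the image in `G_n` of the upper triangular unipotent subgroup of `G_{n−1}`,
under the embedding `[[A,B],[C,D]] ↦ [[A,0,B],[0,I_2,0],[C,0,D]]`; equivalently, upper
triangular unipotent elements of `G_n` whose rows and columns with (1-based) indices
`n` and `n+1` agree with the identity matrix. -/
def Un1Set (n : ℕ) : Set (Matrix (Fin (2*n)) (Fin (2*n)) ℂ) :=
  {g | g ∈ SpSet n ∧ (∀ i j : Fin (2*n), j < i → g i j = 0) ∧ (∀ i, g i i = 1) ∧
    (∀ i j : Fin (2*n), ((i : ℕ) + 1 = n ∨ (i : ℕ) = n ∨ (j : ℕ) + 1 = n ∨ (j : ℕ) = n) →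
      g i j = if i = j then 1 else 0)}

/-- `fb` is the restriction to `G_n` of a polynomial function on `M_{2n}(ℂ)`. -/
def IsPolyFn (n : ℕ) (fb : ↥(SpSet n) → ℂ) : Prop :=
  ∃ P : MvPolynomial (Fin (2*n) × Fin (2*n)) ℂ,
    ∀ x : ↥(SpSet n),
      fb x = MvPolynomial.eval (fun rc => (x : Matrix (Fin (2*n)) (Fin (2*n)) ℂ) rc.1 rc.2) P

/-- `fb(u⁻¹ x v) = fb(x)` for `u ∈ U_n⁻`, `v ∈ U_{n−1}`. -/
def IsUInvariant (n : ℕ) (fb : ↥(SpSet n) → ℂ) : Prop :=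
  ∀ u ∈ UnMinusSet n, ∀ v ∈ Un1Set n, ∀ x y : ↥(SpSet n),
    (y : Matrix (Fin (2*n)) (Fin (2*n)) ℂ) =
      u⁻¹ * (x : Matrix (Fin (2*n)) (Fin (2*n)) ℂ) * v → fb y = fb x

/-- The branching algebra `B`, as a set of functions on `G_n`. -/
def BSet (n : ℕ) : Set (↥(SpSet n) → ℂ) :=
  {fb | IsPolyFn n fb ∧ IsUInvariant n fb}

/-- `t = diag(t_1, …, t_n, t_n⁻¹, …, t_1⁻¹)` (1-based data `t : ℕ → ℂ`). -/
def torusT (n : ℕ) (t : ℕ → ℂ) : Matrix (Fin (2*n)) (Fin (2*n)) ℂ :=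
  Matrix.diagonal (fun p => if (p : ℕ) + 1 ≤ n then t ((p : ℕ) + 1) else (t (2*n - (p : ℕ)))⁻¹)

/-- `s = diag(s_1, …, s_{n−1}, 1, 1, s_{n−1}⁻¹, …, s_1⁻¹)` (1-based data `s : ℕ → ℂ`). -/
def torusS (n : ℕ) (s : ℕ → ℂ) : Matrix (Fin (2*n)) (Fin (2*n)) ℂ :=
  Matrix.diagonal (fun p => if (p : ℕ) + 1 ≤ n - 1 then s ((p : ℕ) + 1)
    else if (p : ℕ) + 1 = n ∨ (p : ℕ) = n then 1 else (s (2*n - (p : ℕ)))⁻¹)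



/-- The weight `wt(C) = Σ_r c_r N^{n−r}` of a column set (1-based entries `c_1 < c_2 < …`). -/
def wtC (n N : ℕ) (C : Finset (Fin (2*n))) : ℕ :=
  ∑ r : Fin C.card, (((C.orderIsoOfFin rfl r).1 : ℕ) + 1) * N ^ (n - ((r : ℕ) + 1))

/-- A pair of Young diagrams `(D, F)` is of order type `σ` (where `σ i = true` means `≥`,
`σ i = false` means `≤`): for `1 ≤ i ≤ n−1`, `σ_i = ≥` implies `d_i ≥ f_{i+1}` and
`σ_i = ≤` implies `d_i ≤ f_{i+1}`. -/
def OfOrderType (n : ℕ) (σ : ℕ → Bool) (d f : ℕ → ℕ) : Prop :=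
  ∀ i, 1 ≤ i → i ≤ n - 1 →
    (σ i = true → f (i+1) ≤ d i) ∧ (σ i = false → d i ≤ f (i+1))

/-- The underlying set of the poset `Γ`: pairs `(i, j)` with `i ∈ {n−1, n, n+1}`,
`1 ≤ j ≤ min i n`, representing `t_j^{(i)}`. -/
def GammaCond (n : ℕ) (q : ℕ × ℕ) : Prop :=
  (q.1 = n - 1 ∨ q.1 = n ∨ q.1 = n + 1) ∧ 1 ≤ q.2 ∧ q.2 ≤ min q.1 n

instance (n : ℕ) : DecidablePred (GammaCond n) := fun q => by unfold GammaCond; infer_instance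

def Gamma (n : ℕ) := {q : ℕ × ℕ // GammaCond n q}

instance (n : ℕ) : DecidableEq (Gamma n) := Subtype.instDecidableEq

/-- The partial order on `Γ`, generated by `t_j^{(i+1)} ≥ t_j^{(i)}` and
`t_j^{(i)} ≥ t_{j+1}^{(i+1)}`. -/
def GammaLE (n : ℕ) : Gamma n → Gamma n → Prop :=
  Relation.ReflTransGen (fun a b =>
    (b.1.1 = a.1.1 + 1 ∧ b.1.2 = a.1.2) ∨ (a.1.1 = b.1.1 + 1 ∧ a.1.2 = b.1.2 + 1))

/-- Order-decreasing subset (down-set) of `Γ`. -/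
def IsDownSet (n : ℕ) (S : Set (Gamma n)) : Prop :=
  ∀ x ∈ S, ∀ y, GammaLE n y x → y ∈ S

/-- `m_C(k) = #{c ∈ C : c ≤ k}` (1-based labels). -/
def mC (n : ℕ) (C : Finset (Fin (2*n))) (k : ℕ) : ℕ :=
  (C.filter (fun x : Fin (2*n) => (x : ℕ) + 1 ≤ k)).card

/-- `S_C = ∪_k {t_1^{(k)}, …, t_{m_C(k)}^{(k)}} ⊆ Γ`. -/
def SCset (n : ℕ) (C : Finset (Fin (2*n))) : Set (Gamma n) :=
  {q | q.1.2 ≤ mC n C q.1.1}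

/-- The characteristic function `χ_{S_C} : Γ → ℕ`. -/
def chiS (n : ℕ) (C : Finset (Fin (2*n))) : Gamma n → ℕ :=
  fun q => if q.1.2 ≤ mC n C q.1.1 then 1 else 0

/-- `p(Δ) = Σ_i χ_{S_{C_i}}`. -/
def pMap (n : ℕ) (l : List (Finset (Fin (2*n)))) : Gamma n → ℕ :=
  fun q => (l.map (fun C => chiS n C q)).sum

/-- The monoid `𝓟(Γ)` of order-preserving maps `Γ → ℤ_{≥0}`, as an additive submonoid of
`Γ → ℕ` under pointwise addition. -/
def PGamma (n : ℕ) : AddSubmonoid (Gamma n → ℕ) where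
  carrier := {p | ∀ x y, GammaLE n x y → p x ≤ p y}
  add_mem' := fun ha hb x y h => add_le_add (ha x y h) (hb x y h)
  zero_mem' := fun _ _ _ => Nat.zero_le _



/-- Generators of the Hibi ideal: `z_{I_i} z_{K_{i−1}} − z_{J′_i} z_{J_{i−1}}` for `1 ≤ i ≤ n−1`. -/
def HibiGens (n : ℕ) : Set (MvPolynomial (↥(LSet n)) ℂ) :=
  {p | ∃ i, 1 ≤ i ∧ i ≤ n - 1 ∧
    ∃ (hI : Iset n i ∈ LSet n) (hK : Kset n (i-1) ∈ LSet n)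
      (hJ' : JPset n i ∈ LSet n) (hJ : Jset n (i-1) ∈ LSet n),
      p = MvPolynomial.X ⟨Iset n i, hI⟩ * MvPolynomial.X ⟨Kset n (i-1), hK⟩
        - MvPolynomial.X ⟨JPset n i, hJ'⟩ * MvPolynomial.X ⟨Jset n (i-1), hJ⟩}

/-! ### Auxiliary lemmas -/

open Finset in
lemma card_filter_fin (m : ℕ) (P : ℕ → Prop) [DecidablePred P] :
    ((Finset.univ : Finset (Fin m)).filter (fun x : Fin m => P (x : ℕ))).card
      = ∑ i ∈ Finset.range m, (if P i then 1 else 0) := by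
  rw [Finset.card_filter]
  rw [← Fin.sum_univ_eq_sum_range (fun i => if P i then 1 else 0) m]

lemma sum_ite_le (m k : ℕ) :
    (∑ i ∈ Finset.range m, (if i + 1 ≤ k then 1 else 0)) = min k m := by
  induction m with
  | zero => simp
  | succ m ih => rw [Finset.sum_range_succ, ih]; split_ifs <;> omega

lemma sum_ite_eq' (m t : ℕ) :
    (∑ i ∈ Finset.range m, (if i + 1 = t then 1 else 0))
      = if 1 ≤ t ∧ t ≤ m then 1 else 0 := by
  induction m with
  | zero => simp only [Finset.range_zero, Finset.sum_empty]; split_ifs <;> omega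
  | succ m ih => rw [Finset.sum_range_succ, ih]; split_ifs <;> omega

lemma mC_eq_sum (n : ℕ) (P : ℕ → Prop) [DecidablePred P] (k : ℕ) :
    mC n (Finset.univ.filter (fun x : Fin (2*n) => P ((x : ℕ) + 1))) k
      = ∑ i ∈ Finset.range (2*n), (if P (i+1) ∧ i + 1 ≤ k then 1 else 0) := by
  unfold mC
  rw [Finset.filter_filter]
  rw [card_filter_fin (2*n) (fun y => P (y+1) ∧ y + 1 ≤ k)]

lemma mC_Iset (n i k : ℕ) (hi : i ≤ n) : mC n (Iset n i) k = min i k := by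
  have : mC n (Iset n i) k
      = ∑ x ∈ Finset.range (2*n), (if (x + 1 ≤ i) ∧ x + 1 ≤ k then 1 else 0) := by
    rw [← mC_eq_sum n (fun y => y ≤ i) k]; rfl
  rw [this]
  have h2 : ∀ x, ((if (x + 1 ≤ i) ∧ x + 1 ≤ k then 1 else 0) : ℕ)
      = if x + 1 ≤ min i k then 1 else 0 := by intro x; split_ifs <;> omega
  simp only [h2, sum_ite_le]
  omega

lemma mC_Jset (n j k : ℕ) (hj : j < n) (hn : 1 ≤ n) :
    mC n (Jset n j) k = min j k + (if n ≤ k then 1 else 0) := by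
  have : mC n (Jset n j) k
      = ∑ x ∈ Finset.range (2*n), (if (x + 1 ≤ j ∨ x + 1 = n) ∧ x + 1 ≤ k then 1 else 0) := by
    rw [← mC_eq_sum n (fun y => y ≤ j ∨ y = n) k]; rfl
  rw [this]
  have h2 : ∀ x, ((if (x + 1 ≤ j ∨ x + 1 = n) ∧ x + 1 ≤ k then 1 else 0) : ℕ)
      = (if x + 1 ≤ min j k then 1 else 0) + (if n ≤ k then (if x + 1 = n then 1 else 0) else 0) := by
    intro x; split_ifs <;> omega
  rw [Finset.sum_congr rfl (fun x _ => h2 x), Finset.sum_add_distrib, sum_ite_le]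
  by_cases hk : n ≤ k
  · simp only [if_pos hk, sum_ite_eq']
    have : (1 ≤ n ∧ n ≤ 2*n) := ⟨hn, by omega⟩
    rw [if_pos this]
    omega
  · simp only [if_neg hk, Finset.sum_const_zero]
    omega

lemma mC_JPset (n j k : ℕ) (hj : j < n) (hn : 1 ≤ n) :
    mC n (JPset n j) k = min j k + (if n + 1 ≤ k then 1 else 0) := by
  have : mC n (JPset n j) k
      = ∑ x ∈ Finset.range (2*n), (if (x + 1 ≤ j ∨ x + 1 = n + 1) ∧ x + 1 ≤ k then 1 else 0) := by
    rw [← mC_eq_sum n (fun y => y ≤ j ∨ y = n + 1) k]; rfl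
  rw [this]
  have h2 : ∀ x, ((if (x + 1 ≤ j ∨ x + 1 = n + 1) ∧ x + 1 ≤ k then 1 else 0) : ℕ)
      = (if x + 1 ≤ min j k then 1 else 0)
        + (if n + 1 ≤ k then (if x + 1 = n + 1 then 1 else 0) else 0) := by
    intro x; split_ifs <;> omega
  rw [Finset.sum_congr rfl (fun x _ => h2 x), Finset.sum_add_distrib, sum_ite_le]
  by_cases hk : n + 1 ≤ k
  · simp only [if_pos hk, sum_ite_eq']
    have : (1 ≤ n + 1 ∧ n + 1 ≤ 2*n) := ⟨by omega, by omega⟩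
    rw [if_pos this]
    omega
  · simp only [if_neg hk, Finset.sum_const_zero]
    omega

lemma mC_Kset (n j k : ℕ) (hj : j < n) (hn : 1 ≤ n) :
    mC n (Kset n j) k
      = min j k + (if n ≤ k then 1 else 0) + (if n + 1 ≤ k then 1 else 0) := by
  have : mC n (Kset n j) k
      = ∑ x ∈ Finset.range (2*n),
          (if (x + 1 ≤ j ∨ x + 1 = n ∨ x + 1 = n + 1) ∧ x + 1 ≤ k then 1 else 0) := by
    rw [← mC_eq_sum n (fun y => y ≤ j ∨ y = n ∨ y = n + 1) k]; rfl
  rw [this]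
  have h2 : ∀ x, ((if (x + 1 ≤ j ∨ x + 1 = n ∨ x + 1 = n + 1) ∧ x + 1 ≤ k then 1 else 0) : ℕ)
      = (if x + 1 ≤ min j k then 1 else 0)
        + (if n ≤ k then (if x + 1 = n then 1 else 0) else 0)
        + (if n + 1 ≤ k then (if x + 1 = n + 1 then 1 else 0) else 0) := by
    intro x; split_ifs <;> omega
  rw [Finset.sum_congr rfl (fun x _ => h2 x), Finset.sum_add_distrib, Finset.sum_add_distrib,
    sum_ite_le]
  by_cases hk1 : n ≤ k <;> by_cases hk2 : n + 1 ≤ k <;>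
    simp only [if_pos, if_neg, hk1, hk2, if_true, if_false, sum_ite_eq', Finset.sum_const_zero] <;>
    first | omega | (split_ifs <;> omega)

lemma mC_mono (n : ℕ) (C : Finset (Fin (2*n))) {k k' : ℕ} (h : k ≤ k') :
    mC n C k ≤ mC n C k' := by
  apply Finset.card_le_card
  intro x hx
  simp only [Finset.mem_filter] at hx ⊢
  exact ⟨hx.1, by omega⟩

lemma mC_succ_le (n : ℕ) (C : Finset (Fin (2*n))) (k : ℕ) :
    mC n C (k+1) ≤ mC n C k + 1 := by
  unfold mC
  have hsub : C.filter (fun x : Fin (2*n) => (x : ℕ) + 1 ≤ k + 1)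
      ⊆ C.filter (fun x : Fin (2*n) => (x : ℕ) + 1 ≤ k)
        ∪ C.filter (fun x : Fin (2*n) => (x : ℕ) + 1 = k + 1) := by
    intro x hx
    simp only [Finset.mem_filter, Finset.mem_union] at hx ⊢
    obtain ⟨hx1, hx2⟩ := hx
    by_cases hc : (x : ℕ) + 1 ≤ k
    · exact Or.inl ⟨hx1, hc⟩
    · exact Or.inr ⟨hx1, by omega⟩
  calc (C.filter (fun x : Fin (2*n) => (x : ℕ) + 1 ≤ k + 1)).card
      ≤ _ := Finset.card_le_card hsub
    _ ≤ _ + _ := Finset.card_union_le _ _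
    _ ≤ _ + 1 := by
        gcongr
        apply Finset.card_le_one.mpr
        intro a ha b hb
        simp only [Finset.mem_filter] at ha hb
        apply Fin.ext
        omega

lemma chiS_step (n : ℕ) (C : Finset (Fin (2*n))) (a b : Gamma n)
    (h : (b.1.1 = a.1.1 + 1 ∧ b.1.2 = a.1.2) ∨ (a.1.1 = b.1.1 + 1 ∧ a.1.2 = b.1.2 + 1)) :
    chiS n C a ≤ chiS n C b := by
  unfold chiS
  rcases h with ⟨h1, h2⟩ | ⟨h1, h2⟩
  · rw [h1, h2]
    have := mC_mono n C (show a.1.1 ≤ a.1.1 + 1 by omega)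
    split_ifs <;> omega
  · rw [h1, h2]
    have := mC_succ_le n C b.1.1
    split_ifs <;> omega

lemma chiS_mem (n : ℕ) (C : Finset (Fin (2*n))) : chiS n C ∈ PGamma n := by
  intro x y hxy
  induction hxy with
  | refl => exact le_refl _
  | tail _ hstep ih => exact le_trans ih (chiS_step n C _ _ hstep)

/-- `χ_{S_C}` as an element of `𝓟(Γ)`. -/
def chiP (n : ℕ) (C : Finset (Fin (2*n))) : ↥(PGamma n) := ⟨chiS n C, chiS_mem n C⟩

lemma Iset_memL (n i : ℕ) (h1 : 1 ≤ i) (h2 : i ≤ n - 1) : Iset n i ∈ LSet n :=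
  Or.inl ⟨i, h1, h2, rfl⟩
lemma Jset_memL (n j : ℕ) (h2 : j ≤ n - 1) : Jset n j ∈ LSet n :=
  Or.inr (Or.inl ⟨j, h2, rfl⟩)
lemma JPset_memL (n j : ℕ) (h2 : j ≤ n - 1) : JPset n j ∈ LSet n :=
  Or.inr (Or.inr (Or.inl ⟨j, h2, rfl⟩))
lemma Kset_memL (n k : ℕ) (h2 : k ≤ n - 2) : Kset n k ∈ LSet n :=
  Or.inr (Or.inr (Or.inr ⟨k, h2, rfl⟩))

lemma rel_chi (n : ℕ) (hn : 2 ≤ n) (i : ℕ) (h1 : 1 ≤ i) (h2 : i ≤ n - 1) :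
    (fun q => chiS n (Iset n i) q + chiS n (Kset n (i-1)) q)
      = (fun q => chiS n (JPset n i) q + chiS n (Jset n (i-1)) q) := by
  funext q
  unfold chiS
  rw [mC_Iset n i _ (by omega), mC_Kset n (i-1) _ (by omega) (by omega),
    mC_JPset n i _ (by omega) (by omega), mC_Jset n (i-1) _ (by omega) (by omega)]
  split_ifs <;> omega

/-- Value of `p` at position `(r,k)` of `Γ`, or `0` if out of range. -/
def pv (n : ℕ) (p : Gamma n → ℕ) (r k : ℕ) : ℕ :=
  if h : GammaCond n (r, k) then p ⟨(r, k), h⟩ else 0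

/-- Number of positions in row `r` where `p` is `≥ m`. -/
def cnt (n : ℕ) (p : Gamma n → ℕ) (r m : ℕ) : ℕ :=
  ∑ k ∈ Finset.range n, if m ≤ pv n p r (k+1) then 1 else 0

lemma pv_self (n : ℕ) (p : Gamma n → ℕ) (q : Gamma n) : pv n p q.1.1 q.1.2 = p q :=
  dif_pos q.2

lemma pv_zero_of_not (n : ℕ) (p : Gamma n → ℕ) (r k : ℕ) (h : ¬ GammaCond n (r, k)) :
    pv n p r k = 0 := dif_neg h

lemma gammaLE_of_steps {n : ℕ} {a b : Gamma n}
    (h : (b.1.1 = a.1.1 + 1 ∧ b.1.2 = a.1.2) ∨ (a.1.1 = b.1.1 + 1 ∧ a.1.2 = b.1.2 + 1)) :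
    GammaLE n a b := Relation.ReflTransGen.single h

lemma pv_antitone (n : ℕ) (hn : 2 ≤ n) (p : Gamma n → ℕ)
    (hp : ∀ x y, GammaLE n x y → p x ≤ p y) (r k : ℕ) (hk : 1 ≤ k)
    (hr : r = n - 1 ∨ r = n ∨ r = n + 1) :
    pv n p r (k+1) ≤ pv n p r k := by
  by_cases h1 : GammaCond n (r, k+1)
  · have hkb : k + 1 ≤ min r n := h1.2.2
    have h0 : GammaCond n (r, k) := ⟨h1.1, hk, by omega⟩
    rw [pv_self n p ⟨(r,k+1), h1⟩, pv_self n p ⟨(r,k), h0⟩]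
    rcases hr with hr | hr | hr
    · -- r = n-1 : go through (n, k+1)
      subst hr
      have hm : GammaCond n (n, k+1) := ⟨Or.inr (Or.inl rfl), by omega, by omega⟩
      refine hp _ _ (Relation.ReflTransGen.head (b := ⟨(n, k+1), hm⟩) ?_
        (Relation.ReflTransGen.single ?_))
      · exact Or.inl ⟨show n = (n-1) + 1 by omega, rfl⟩
      · exact Or.inr ⟨show n = (n-1) + 1 by omega, rfl⟩
    · -- r = n : go through (n-1, k)
      have hm : GammaCond n (n-1, k) := ⟨Or.inl rfl, hk, by omega⟩
      refine hp _ _ (Relation.ReflTransGen.head (b := ⟨(n-1, k), hm⟩) ?_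
        (Relation.ReflTransGen.single ?_))
      · exact Or.inr ⟨show r = (n-1) + 1 by omega, rfl⟩
      · exact Or.inl ⟨show r = (n-1) + 1 by omega, rfl⟩
    · -- r = n+1 : go through (n, k)
      have hm : GammaCond n (n, k) := ⟨Or.inr (Or.inl rfl), hk, by omega⟩
      refine hp _ _ (Relation.ReflTransGen.head (b := ⟨(n, k), hm⟩) ?_
        (Relation.ReflTransGen.single ?_))
      · exact Or.inr ⟨show r = n + 1 by omega, rfl⟩
      · exact Or.inl ⟨show r = n + 1 by omega, rfl⟩
  · rw [pv_zero_of_not n p r (k+1) h1]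
    exact Nat.zero_le _

lemma gle_trans {n : ℕ} {a b c : Gamma n} (h1 : GammaLE n a b) (h2 : GammaLE n b c) :
    GammaLE n a c := Relation.ReflTransGen.trans h1 h2

lemma pv_le_up (n : ℕ) (hn : 2 ≤ n) (p : Gamma n → ℕ)
    (hp : ∀ x y, GammaLE n x y → p x ≤ p y) (r k : ℕ)
    (hr : r = n - 1 ∨ r = n) : pv n p r k ≤ pv n p (r+1) k := by
  by_cases h1 : GammaCond n (r, k)
  · have h2 : GammaCond n (r+1, k) := by
      refine ⟨?_, h1.2.1, ?_⟩
      · rcases hr with hr | hr <;> subst hr <;> [exact Or.inr (Or.inl (by omega)); exact Or.inr (Or.inr rfl)]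
      · have := h1.2.2; rcases hr with hr | hr <;> omega
    rw [pv_self n p ⟨(r,k), h1⟩, pv_self n p ⟨(r+1,k), h2⟩]
    exact hp _ _ (Relation.ReflTransGen.single (Or.inl ⟨rfl, rfl⟩))
  · rw [pv_zero_of_not n p r k h1]; exact Nat.zero_le _

lemma pv_diag_le (n : ℕ) (hn : 2 ≤ n) (p : Gamma n → ℕ)
    (hp : ∀ x y, GammaLE n x y → p x ≤ p y) (r k : ℕ) (hk : 1 ≤ k)
    (hr : r = n - 1 ∨ r = n) : pv n p (r+1) (k+1) ≤ pv n p r k := by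
  by_cases h1 : GammaCond n (r+1, k+1)
  · have h2 : GammaCond n (r, k) := by
      refine ⟨?_, hk, ?_⟩
      · rcases hr with hr | hr <;> [exact Or.inl hr; exact Or.inr (Or.inl hr)]
      · have := h1.2.2; rcases hr with hr | hr <;> omega
    rw [pv_self n p ⟨(r+1,k+1), h1⟩, pv_self n p ⟨(r,k), h2⟩]
    exact hp _ _ (Relation.ReflTransGen.single (Or.inr ⟨rfl, rfl⟩))
  · rw [pv_zero_of_not n p (r+1) (k+1) h1]; exact Nat.zero_le _

lemma topG_cond (n : ℕ) (hn : 2 ≤ n) : GammaCond n (n+1, 1) :=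
  ⟨Or.inr (Or.inr rfl), le_refl 1, by omega⟩

/-- Every element of `Γ` is below `t_1^{(n+1)}`. -/
lemma le_topG (n : ℕ) (hn : 2 ≤ n) (q : Gamma n) :
    GammaLE n q ⟨(n+1, 1), topG_cond n hn⟩ := by
  -- first go up to row n+1
  have hup : ∀ q : Gamma n, ∃ h : GammaCond n (n+1, q.1.2),
      GammaLE n q ⟨(n+1, q.1.2), h⟩ := by
    intro q
    obtain ⟨hr, h1, h2⟩ := q.2
    rcases hr with hr | hr | hr
    · have hm : GammaCond n (n, q.1.2) := ⟨Or.inr (Or.inl rfl), h1, by omega⟩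
      have ht : GammaCond n (n+1, q.1.2) := ⟨Or.inr (Or.inr rfl), h1, by omega⟩
      exact ⟨ht, Relation.ReflTransGen.head (b := ⟨(n, q.1.2), hm⟩)
        (Or.inl ⟨show n = q.1.1 + 1 by omega, rfl⟩)
        (Relation.ReflTransGen.single (Or.inl ⟨rfl, rfl⟩))⟩
    · have ht : GammaCond n (n+1, q.1.2) := ⟨Or.inr (Or.inr rfl), h1, by omega⟩
      exact ⟨ht, Relation.ReflTransGen.single (Or.inl ⟨show n + 1 = q.1.1 + 1 by omega, rfl⟩)⟩
    · refine ⟨⟨Or.inr (Or.inr rfl), h1, by omega⟩, ?_⟩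
      have he : (⟨(n+1, q.1.2), ⟨Or.inr (Or.inr rfl), h1, by omega⟩⟩ : Gamma n) = q := by
        apply Subtype.ext
        obtain ⟨⟨r0, k0⟩, hcond⟩ := q
        simp only at hr ⊢
        rw [hr]
      rw [he]
      exact Relation.ReflTransGen.refl
  -- then descend in row n+1
  have hdown : ∀ j : ℕ, ∀ h : GammaCond n (n+1, j),
      GammaLE n ⟨(n+1, j), h⟩ ⟨(n+1, 1), topG_cond n hn⟩ := by
    intro j
    induction j with
    | zero => intro h; exact absurd h.2.1 (by omega)
    | succ j ih =>
      intro h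
      by_cases hj : j = 0
      · subst hj
        exact Relation.ReflTransGen.refl
      · have hj1 : 1 ≤ j := by omega
        have hjle : j + 1 ≤ min (n+1) n := h.2.2
        have hmid : GammaCond n (n, j) := ⟨Or.inr (Or.inl rfl), hj1, by omega⟩
        have hprev : GammaCond n (n+1, j) := ⟨Or.inr (Or.inr rfl), hj1, by omega⟩
        refine gle_trans (gammaLE_of_steps (a := ⟨(n+1, j+1), h⟩) (b := ⟨(n, j), hmid⟩)
          (Or.inr ⟨rfl, rfl⟩)) (gle_trans (gammaLE_of_steps (a := ⟨(n, j), hmid⟩)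
          (b := ⟨(n+1, j), hprev⟩) (Or.inl ⟨rfl, rfl⟩)) (ih hprev))
  obtain ⟨h, hq⟩ := hup q
  exact Relation.ReflTransGen.trans hq (hdown q.1.2 h)

lemma p_le_top (n : ℕ) (hn : 2 ≤ n) (p : Gamma n → ℕ)
    (hp : ∀ x y, GammaLE n x y → p x ≤ p y) (q : Gamma n) :
    p q ≤ pv n p (n+1) 1 := by
  rw [show pv n p (n+1) 1 = p ⟨(n+1,1), topG_cond n hn⟩ from dif_pos _]
  exact hp _ _ (le_topG n hn q)

lemma sum_indicator_prefix (N : ℕ) (a : ℕ → ℕ) (h01 : ∀ k, a k ≤ 1)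
    (hmono : ∀ k, 1 ≤ k → a (k+1) ≤ a k) (j : ℕ) (hj1 : 1 ≤ j) (hjn : j ≤ N) :
    (j ≤ ∑ k ∈ Finset.range N, a (k+1)) ↔ 1 ≤ a j := by
  have mono' : ∀ i jj, 1 ≤ i → i ≤ jj → a jj ≤ a i := by
    intro i jj h1 h2
    induction jj, h2 using Nat.le_induction with
    | base => exact le_refl _
    | succ jj hjj ih => exact le_trans (hmono jj (by omega)) ih
  constructor
  · intro hs
    by_contra h0
    have ha : a j = 0 := by omega
    have hb : ∀ k ∈ Finset.range N, a (k+1) ≤ if k + 1 ≤ j - 1 then 1 else 0 := by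
      intro k _
      split_ifs with hc
      · exact h01 _
      · have := mono' j (k+1) hj1 (by omega)
        omega
    have := Finset.sum_le_sum hb
    rw [sum_ite_le] at this
    omega
  · intro ha
    calc j = ∑ _k ∈ Finset.range j, 1 := by simp
      _ ≤ ∑ k ∈ Finset.range j, a (k+1) := by
          refine Finset.sum_le_sum (fun k hk => ?_)
          rw [Finset.mem_range] at hk
          have := mono' (k+1) j (by omega) (by omega)
          omega
      _ ≤ ∑ k ∈ Finset.range N, a (k+1) := by
          refine Finset.sum_le_sum_of_subset (Finset.range_subset_range.mpr hjn)

lemma cnt_ge_iff (n : ℕ) (hn : 2 ≤ n) (p : Gamma n → ℕ)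
    (hp : ∀ x y, GammaLE n x y → p x ≤ p y) (m : ℕ) (hm : 1 ≤ m) (r : ℕ)
    (hr : r = n - 1 ∨ r = n ∨ r = n + 1) (j : ℕ) (hj1 : 1 ≤ j) (hjn : j ≤ n) :
    (j ≤ cnt n p r m) ↔ m ≤ pv n p r j := by
  have := sum_indicator_prefix n (fun k => if m ≤ pv n p r k then 1 else 0)
    (fun k => by show (if m ≤ pv n p r k then 1 else 0 : ℕ) ≤ 1; split_ifs <;> omega)
    (fun k hk => by
      have := pv_antitone n hn p hp r k hk hr
      show (if m ≤ pv n p r (k+1) then 1 else 0 : ℕ) ≤ (if m ≤ pv n p r k then 1 else 0 : ℕ)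
      split_ifs <;> omega) j hj1 hjn
  unfold cnt
  rw [this]
  split_ifs with h
  · simp [h]
  · simp [h]

lemma cnt_le_n (n : ℕ) (p : Gamma n → ℕ) (r m : ℕ) : cnt n p r m ≤ n := by
  unfold cnt
  calc _ ≤ ∑ _k ∈ Finset.range n, 1 := Finset.sum_le_sum (fun k _ => by split_ifs <;> omega)
    _ = n := by simp

/-- The element of `𝓛` with threshold triple `(a, b, c)`. -/
def Cof (n a b c : ℕ) : Finset (Fin (2*n)) :=
  if b = a then (if c = b then Iset n a else JPset n a)
  else (if c = b then Jset n a else Kset n a)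

/-- The `m`-th level set of `p`, as an element of `𝓛`. -/
def CofF (n : ℕ) (p : Gamma n → ℕ) (m : ℕ) : Finset (Fin (2*n)) :=
  Cof n (cnt n p (n-1) m) (cnt n p n m) (cnt n p (n+1) m)

/-- The canonical multichain decomposition of `p`. -/
def levelsM (n : ℕ) (p : Gamma n → ℕ) : Multiset (Finset (Fin (2*n))) :=
  (Multiset.range (pv n p (n+1) 1)).map (fun m => CofF n p (m+1))

/-- Sum of the characteristic functions of a multiset of column sets. -/
def sumChi (n : ℕ) (M : Multiset (Finset (Fin (2*n)))) : Gamma n → ℕ :=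
  fun q => (M.map (fun C => chiS n C q)).sum

lemma cnt_adm (n : ℕ) (hn : 2 ≤ n) (p : Gamma n → ℕ)
    (hp : ∀ x y, GammaLE n x y → p x ≤ p y) (m : ℕ) (hm : 1 ≤ m) :
    cnt n p (n-1) m ≤ cnt n p n m ∧ cnt n p n m ≤ cnt n p (n+1) m ∧
    cnt n p n m ≤ cnt n p (n-1) m + 1 ∧ cnt n p (n+1) m ≤ cnt n p n m + 1 ∧
    cnt n p (n-1) m ≤ n - 1 ∧ cnt n p n m ≤ n ∧ cnt n p (n+1) m ≤ n := by
  have e1 : n - 1 + 1 = n := by omega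
  refine ⟨?_, ?_, ?_, ?_, ?_, cnt_le_n n p n m, cnt_le_n n p (n+1) m⟩
  · refine Finset.sum_le_sum (fun k _ => ?_)
    have h := pv_le_up n hn p hp (n-1) (k+1) (Or.inl rfl)
    rw [e1] at h
    split_ifs <;> omega
  · refine Finset.sum_le_sum (fun k _ => ?_)
    have h := pv_le_up n hn p hp n (k+1) (Or.inr rfl)
    split_ifs <;> omega
  · -- b ≤ a + 1
    unfold cnt
    have hR : Finset.range n = Finset.range (n-1+1) := by rw [e1]
    have hL : ∑ k ∈ Finset.range n, (if m ≤ pv n p n (k+1) then 1 else 0 : ℕ)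
        = (∑ k ∈ Finset.range (n-1), (if m ≤ pv n p n (k+1+1) then 1 else 0 : ℕ))
          + (if m ≤ pv n p n (0+1) then 1 else 0 : ℕ) := by
      rw [hR, Finset.sum_range_succ']
    rw [hL]
    have hstep : ∀ k ∈ Finset.range (n-1),
        (if m ≤ pv n p n (k+1+1) then 1 else 0)
          ≤ (if m ≤ pv n p (n-1) (k+1) then 1 else 0 : ℕ) := by
      intro k _
      have h := pv_diag_le n hn p hp (n-1) (k+1) (by omega) (Or.inl rfl)
      rw [e1] at h
      split_ifs <;> omega
    have h1 := Finset.sum_le_sum hstep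
    have h2 : ∑ k ∈ Finset.range (n-1), (if m ≤ pv n p (n-1) (k+1) then 1 else 0 : ℕ)
        ≤ ∑ k ∈ Finset.range n, (if m ≤ pv n p (n-1) (k+1) then 1 else 0 : ℕ) :=
      Finset.sum_le_sum_of_subset (Finset.range_subset_range.mpr (by omega))
    have h3 : (if m ≤ pv n p n (0+1) then 1 else 0 : ℕ) ≤ 1 := by split_ifs <;> omega
    omega
  · -- c ≤ b + 1
    unfold cnt
    have hR : Finset.range n = Finset.range (n-1+1) := by rw [e1]
    have hL : ∑ k ∈ Finset.range n, (if m ≤ pv n p (n+1) (k+1) then 1 else 0 : ℕ)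
        = (∑ k ∈ Finset.range (n-1), (if m ≤ pv n p (n+1) (k+1+1) then 1 else 0 : ℕ))
          + (if m ≤ pv n p (n+1) (0+1) then 1 else 0 : ℕ) := by
      rw [hR, Finset.sum_range_succ']
    rw [hL]
    have hstep : ∀ k ∈ Finset.range (n-1),
        (if m ≤ pv n p (n+1) (k+1+1) then 1 else 0)
          ≤ (if m ≤ pv n p n (k+1) then 1 else 0 : ℕ) := by
      intro k _
      have h := pv_diag_le n hn p hp n (k+1) (by omega) (Or.inr rfl)
      split_ifs <;> omega
    have h1 := Finset.sum_le_sum hstep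
    have h2 : ∑ k ∈ Finset.range (n-1), (if m ≤ pv n p n (k+1) then 1 else 0 : ℕ)
        ≤ ∑ k ∈ Finset.range n, (if m ≤ pv n p n (k+1) then 1 else 0 : ℕ) :=
      Finset.sum_le_sum_of_subset (Finset.range_subset_range.mpr (by omega))
    have h3 : (if m ≤ pv n p (n+1) (0+1) then 1 else 0 : ℕ) ≤ 1 := by split_ifs <;> omega
    omega
  · -- a ≤ n - 1
    unfold cnt
    have hR : Finset.range n = Finset.range (n-1+1) := by rw [e1]
    have hL : ∑ k ∈ Finset.range n, (if m ≤ pv n p (n-1) (k+1) then 1 else 0 : ℕ)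
        = (∑ k ∈ Finset.range (n-1), (if m ≤ pv n p (n-1) (k+1) then 1 else 0 : ℕ))
          + (if m ≤ pv n p (n-1) (n-1+1) then 1 else 0 : ℕ) := by
      rw [hR, Finset.sum_range_succ]
    rw [hL]
    have hz : pv n p (n-1) (n-1+1) = 0 := by
      apply pv_zero_of_not
      intro hcond
      have := hcond.2.2
      omega
    rw [hz, if_neg (by omega)]
    have : ∑ k ∈ Finset.range (n-1), (if m ≤ pv n p (n-1) (k+1) then 1 else 0 : ℕ)
        ≤ ∑ _k ∈ Finset.range (n-1), 1 := Finset.sum_le_sum (fun k _ => by split_ifs <;> omega)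
    simp only [Finset.sum_const, Finset.card_range, smul_eq_mul, mul_one] at this
    omega

lemma cnt_top_pos (n : ℕ) (hn : 2 ≤ n) (p : Gamma n → ℕ) (m : ℕ)
    (hm2 : m ≤ pv n p (n+1) 1) :
    1 ≤ cnt n p (n+1) m := by
  unfold cnt
  have h0 : (0 : ℕ) ∈ Finset.range n := by simp; omega
  calc (1 : ℕ) = (if m ≤ pv n p (n+1) (0+1) then 1 else 0 : ℕ) := by rw [if_pos hm2]
    _ ≤ _ := Finset.single_le_sum (f := fun k => (if m ≤ pv n p (n+1) (k+1) then 1 else 0 : ℕ))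
        (fun k _ => Nat.zero_le _) h0

lemma CofF_memL (n : ℕ) (hn : 2 ≤ n) (p : Gamma n → ℕ)
    (hp : ∀ x y, GammaLE n x y → p x ≤ p y) (m : ℕ) (hm1 : 1 ≤ m)
    (hm2 : m ≤ pv n p (n+1) 1) : CofF n p m ∈ LSet n := by
  obtain ⟨h1, h2, h3, h4, h5, h6, h7⟩ := cnt_adm n hn p hp m hm1
  have h8 := cnt_top_pos n hn p m hm2
  unfold CofF Cof
  split_ifs with hb hc hc
  · exact Iset_memL n _ (by omega) h5
  · exact JPset_memL n _ h5
  · exact Jset_memL n _ h5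
  · exact Kset_memL n _ (by omega)

lemma mC_Cof (n : ℕ) (hn : 2 ≤ n) (a b c : ℕ) (hab : a ≤ b) (hba : b ≤ a + 1)
    (hbc : b ≤ c) (hcb : c ≤ b + 1) (ha : a ≤ n - 1) (hc : c ≤ n) :
    mC n (Cof n a b c) (n-1) = a ∧ mC n (Cof n a b c) n = b
      ∧ mC n (Cof n a b c) (n+1) = c := by
  unfold Cof
  split_ifs with hb0 hc0 hc0
  · rw [mC_Iset n a _ (by omega), mC_Iset n a _ (by omega), mC_Iset n a _ (by omega)]
    omega
  · rw [mC_JPset n a _ (by omega) (by omega), mC_JPset n a _ (by omega) (by omega),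
      mC_JPset n a _ (by omega) (by omega)]
    refine ⟨?_, ?_, ?_⟩ <;> split_ifs <;> omega
  · rw [mC_Jset n a _ (by omega) (by omega), mC_Jset n a _ (by omega) (by omega),
      mC_Jset n a _ (by omega) (by omega)]
    refine ⟨?_, ?_, ?_⟩ <;> split_ifs <;> omega
  · rw [mC_Kset n a _ (by omega) (by omega), mC_Kset n a _ (by omega) (by omega),
      mC_Kset n a _ (by omega) (by omega)]
    refine ⟨?_, ?_, ?_⟩ <;> split_ifs <;> omega

lemma mC_rows (n : ℕ) (hn : 2 ≤ n) (C : Finset (Fin (2*n))) (hC : C ∈ LSet n) :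
    mC n C (n-1) ≤ n - 1 ∧ mC n C n ≤ n ∧ mC n C (n+1) ≤ n ∧ 1 ≤ mC n C (n+1) := by
  rcases hC with ⟨i, h1, h2, rfl⟩ | ⟨j, h2, rfl⟩ | ⟨j, h2, rfl⟩ | ⟨k, h2, rfl⟩
  · rw [mC_Iset n i _ (by omega), mC_Iset n i _ (by omega), mC_Iset n i _ (by omega)]
    omega
  · rw [mC_Jset n j _ (by omega) (by omega), mC_Jset n j _ (by omega) (by omega),
      mC_Jset n j _ (by omega) (by omega)]
    refine ⟨?_, ?_, ?_, ?_⟩ <;> split_ifs <;> omega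
  · rw [mC_JPset n j _ (by omega) (by omega), mC_JPset n j _ (by omega) (by omega),
      mC_JPset n j _ (by omega) (by omega)]
    refine ⟨?_, ?_, ?_, ?_⟩ <;> split_ifs <;> omega
  · rw [mC_Kset n k _ (by omega) (by omega), mC_Kset n k _ (by omega) (by omega),
      mC_Kset n k _ (by omega) (by omega)]
    refine ⟨?_, ?_, ?_, ?_⟩ <;> split_ifs <;> omega

lemma Cof_tri (n : ℕ) (hn : 2 ≤ n) (C : Finset (Fin (2*n))) (hC : C ∈ LSet n) :
    Cof n (mC n C (n-1)) (mC n C n) (mC n C (n+1)) = C := by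
  rcases hC with ⟨i, h1, h2, rfl⟩ | ⟨j, h2, rfl⟩ | ⟨j, h2, rfl⟩ | ⟨k, h2, rfl⟩
  · have e1 : mC n (Iset n i) (n-1) = i := by rw [mC_Iset n i _ (by omega)]; omega
    have e2 : mC n (Iset n i) n = i := by rw [mC_Iset n i _ (by omega)]; omega
    have e3 : mC n (Iset n i) (n+1) = i := by rw [mC_Iset n i _ (by omega)]; omega
    rw [e1, e2, e3]
    unfold Cof
    rw [if_pos rfl, if_pos rfl]
  · have e1 : mC n (Jset n j) (n-1) = j := by
      rw [mC_Jset n j _ (by omega) (by omega)]; split_ifs <;> omega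
    have e2 : mC n (Jset n j) n = j + 1 := by
      rw [mC_Jset n j _ (by omega) (by omega)]; split_ifs <;> omega
    have e3 : mC n (Jset n j) (n+1) = j + 1 := by
      rw [mC_Jset n j _ (by omega) (by omega)]; split_ifs <;> omega
    rw [e1, e2, e3]
    unfold Cof
    rw [if_neg (by omega), if_pos rfl]
  · have e1 : mC n (JPset n j) (n-1) = j := by
      rw [mC_JPset n j _ (by omega) (by omega)]; split_ifs <;> omega
    have e2 : mC n (JPset n j) n = j := by
      rw [mC_JPset n j _ (by omega) (by omega)]; split_ifs <;> omega
    have e3 : mC n (JPset n j) (n+1) = j + 1 := by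
      rw [mC_JPset n j _ (by omega) (by omega)]; split_ifs <;> omega
    rw [e1, e2, e3]
    unfold Cof
    rw [if_pos rfl, if_neg (by omega)]
  · have e1 : mC n (Kset n k) (n-1) = k := by
      rw [mC_Kset n k _ (by omega) (by omega)]; split_ifs <;> omega
    have e2 : mC n (Kset n k) n = k + 1 := by
      rw [mC_Kset n k _ (by omega) (by omega)]; split_ifs <;> omega
    have e3 : mC n (Kset n k) (n+1) = k + 2 := by
      rw [mC_Kset n k _ (by omega) (by omega)]; split_ifs <;> omega
    rw [e1, e2, e3]
    unfold Cof
    rw [if_neg (by omega), if_neg (by omega)]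

lemma sumChi_levelsM (n : ℕ) (hn : 2 ≤ n) (p : Gamma n → ℕ)
    (hp : ∀ x y, GammaLE n x y → p x ≤ p y) :
    sumChi n (levelsM n p) = p := by
  funext q
  unfold sumChi levelsM
  rw [Multiset.map_map]
  have hsum : ((Multiset.range (pv n p (n+1) 1)).map
      (fun m => chiS n (CofF n p (m+1)) q)).sum
      = ∑ m ∈ Finset.range (pv n p (n+1) 1), chiS n (CofF n p (m+1)) q := rfl
  rw [Function.comp_def, hsum]
  have hterm : ∀ m, chiS n (CofF n p (m+1)) q = if m + 1 ≤ p q then 1 else 0 := by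
    intro m
    obtain ⟨h1, h2, h3, h4, h5, h6, h7⟩ := cnt_adm n hn p hp (m+1) (by omega)
    have hadm := mC_Cof n hn (cnt n p (n-1) (m+1)) (cnt n p n (m+1)) (cnt n p (n+1) (m+1))
      h1 h3 h2 h4 h5 h7
    have hq := q.2
    obtain ⟨hr, hj1, hj2⟩ := hq
    have hmc : mC n (CofF n p (m+1)) q.1.1 = cnt n p q.1.1 (m+1) := by
      unfold CofF
      rcases hr with hr | hr | hr <;> rw [hr] <;> [exact hadm.1; exact hadm.2.1; exact hadm.2.2]
    unfold chiS
    rw [hmc]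
    have hiff := cnt_ge_iff n hn p hp (m+1) (by omega) q.1.1 (by tauto) q.1.2 hj1 (by omega)
    rw [pv_self n p q] at hiff
    split_ifs with hh1 hh2 hh2
    · rfl
    · exact absurd (hiff.mp hh1) hh2
    · exact absurd (hiff.mpr hh2) hh1
    · rfl
  rw [Finset.sum_congr rfl (fun m _ => hterm m), sum_ite_le]
  have := p_le_top n hn p hp q
  omega

/-- Comparison of column sets via their threshold triples. -/
def le3 (n : ℕ) (C D : Finset (Fin (2*n))) : Prop :=
  mC n C (n-1) ≤ mC n D (n-1) ∧ mC n C n ≤ mC n D n ∧ mC n C (n+1) ≤ mC n D (n+1)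

lemma le3_refl (n : ℕ) (C : Finset (Fin (2*n))) : le3 n C C :=
  ⟨le_refl _, le_refl _, le_refl _⟩

lemma le3_trans {n : ℕ} {C D E : Finset (Fin (2*n))} (h1 : le3 n C D) (h2 : le3 n D E) :
    le3 n C E :=
  ⟨le_trans h1.1 h2.1, le_trans h1.2.1 h2.2.1, le_trans h1.2.2 h2.2.2⟩

/-- All the basic inequalities satisfied by threshold triples of elements of `𝓛`. -/
lemma mC_facts (n : ℕ) (hn : 2 ≤ n) (C : Finset (Fin (2*n))) (hC : C ∈ LSet n) :
    mC n C (n-1) ≤ mC n C n ∧ mC n C n ≤ mC n C (n-1) + 1 ∧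
    mC n C n ≤ mC n C (n+1) ∧ mC n C (n+1) ≤ mC n C n + 1 ∧
    mC n C (n-1) ≤ n - 1 ∧ mC n C n ≤ n ∧ mC n C (n+1) ≤ n ∧ 1 ≤ mC n C (n+1) := by
  rcases hC with ⟨i, h1, h2, rfl⟩ | ⟨j, h2, rfl⟩ | ⟨j, h2, rfl⟩ | ⟨k, h2, rfl⟩
  · rw [mC_Iset n i _ (by omega), mC_Iset n i _ (by omega), mC_Iset n i _ (by omega)]
    omega
  · rw [mC_Jset n j _ (by omega) (by omega), mC_Jset n j _ (by omega) (by omega),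
      mC_Jset n j _ (by omega) (by omega)]
    split_ifs <;> omega
  · rw [mC_JPset n j _ (by omega) (by omega), mC_JPset n j _ (by omega) (by omega),
      mC_JPset n j _ (by omega) (by omega)]
    split_ifs <;> omega
  · rw [mC_Kset n k _ (by omega) (by omega), mC_Kset n k _ (by omega) (by omega),
      mC_Kset n k _ (by omega) (by omega)]
    split_ifs <;> omega

/-- Classification of incomparable pairs in `𝓛`. -/
lemma incomp_class (n : ℕ) (hn : 2 ≤ n) (u v : Finset (Fin (2*n)))
    (hu : u ∈ LSet n) (hv : v ∈ LSet n) (h1 : ¬ le3 n u v) (h2 : ¬ le3 n v u) :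
    ∃ i, 1 ≤ i ∧ i ≤ n - 1 ∧
      ((u = Iset n i ∧ v = Kset n (i-1)) ∨ (v = Iset n i ∧ u = Kset n (i-1))) := by
  obtain ⟨fu1, fu2, fu3, fu4, fu5, fu6, fu7, fu8⟩ := mC_facts n hn u hu
  obtain ⟨fv1, fv2, fv3, fv4, fv5, fv6, fv7, fv8⟩ := mC_facts n hn v hv
  unfold le3 at h1 h2
  push_neg at h1 h2
  have hcu := Cof_tri n hn u hu
  have hcv := Cof_tri n hn v hv
  set a := mC n u (n-1) with ha
  set b := mC n u n with hb
  set c := mC n u (n+1) with hc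
  set a' := mC n v (n-1) with ha'
  set b' := mC n v n with hb'
  set c' := mC n v (n+1) with hc'
  have hkey : (a = a' + 1 ∧ b = a ∧ c = a ∧ b' = a' + 1 ∧ c' = a' + 2)
      ∨ (a' = a + 1 ∧ b' = a' ∧ c' = a' ∧ b = a + 1 ∧ c = a + 2) := by omega
  rcases hkey with ⟨k1, k2, k3, k4, k5⟩ | ⟨k1, k2, k3, k4, k5⟩
  · refine ⟨a, by omega, by omega, Or.inl ⟨?_, ?_⟩⟩
    · rw [← hcu, k2, k3]
      unfold Cof
      rw [if_pos rfl, if_pos rfl]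
    · rw [← hcv, k4, k5]
      unfold Cof
      rw [if_neg (by omega), if_neg (by omega)]
      congr 1
      omega
  · refine ⟨a', by omega, by omega, Or.inr ⟨?_, ?_⟩⟩
    · rw [← hcv, k2, k3]
      unfold Cof
      rw [if_pos rfl, if_pos rfl]
    · rw [← hcu, k4, k5]
      unfold Cof
      rw [if_neg (by omega), if_neg (by omega)]
      congr 1
      omega

lemma chiS_le_one (n : ℕ) (C : Finset (Fin (2*n))) (q : Gamma n) : chiS n C q ≤ 1 := by
  unfold chiS; split_ifs <;> omega

lemma chiS_le_of_le3 (n : ℕ) (C D : Finset (Fin (2*n))) (h : le3 n C D) (q : Gamma n) :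
    chiS n C q ≤ chiS n D q := by
  obtain ⟨hr, hj1, hj2⟩ := q.2
  unfold chiS
  rcases hr with hr | hr | hr <;> rw [hr] <;>
    [have := h.1; have := h.2.1; have := h.2.2] <;> split_ifs <;> omega

lemma exists_min3 (n : ℕ) (M : Multiset (Finset (Fin (2*n)))) (hne : M ≠ 0)
    (hch : ∀ u ∈ M, ∀ v ∈ M, le3 n u v ∨ le3 n v u) :
    ∃ u ∈ M, ∀ v ∈ M, le3 n u v := by
  induction M using Multiset.induction with
  | empty => exact absurd rfl hne
  | cons a S ih =>
    by_cases hS : S = 0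
    · subst hS
      refine ⟨a, Multiset.mem_cons_self a 0, fun v hv => ?_⟩
      rw [Multiset.mem_cons] at hv
      rcases hv with rfl | hv
      · exact le3_refl n v
      · exact absurd hv (by simp)
    · obtain ⟨u, hu, hmin⟩ := ih hS (fun x hx y hy =>
        hch x (Multiset.mem_cons_of_mem hx) y (Multiset.mem_cons_of_mem hy))
      rcases hch a (Multiset.mem_cons_self a S) u (Multiset.mem_cons_of_mem hu) with hau | hua
      · refine ⟨a, Multiset.mem_cons_self a S, fun v hv => ?_⟩
        rw [Multiset.mem_cons] at hv
        rcases hv with rfl | hv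
        · exact le3_refl n v
        · exact le3_trans hau (hmin v hv)
      · exact ⟨u, Multiset.mem_cons_of_mem hu, fun v hv => by
          rw [Multiset.mem_cons] at hv
          rcases hv with rfl | hv
          · exact hua
          · exact hmin v hv⟩

lemma sumChi_cons (n : ℕ) (a : Finset (Fin (2*n))) (S : Multiset (Finset (Fin (2*n))))
    (q : Gamma n) : sumChi n (a ::ₘ S) q = chiS n a q + sumChi n S q := by
  unfold sumChi
  rw [Multiset.map_cons, Multiset.sum_cons]

lemma sumChi_mono (n : ℕ) (M : Multiset (Finset (Fin (2*n)))) :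
    ∀ x y, GammaLE n x y → sumChi n M x ≤ sumChi n M y := by
  induction M using Multiset.induction with
  | empty => intro x y _; exact le_refl 0
  | cons a S ih =>
    intro x y h
    rw [sumChi_cons, sumChi_cons]
    exact add_le_add (chiS_mem n a x y h) (ih x y h)

lemma sumChi_le_card (n : ℕ) (M : Multiset (Finset (Fin (2*n)))) (q : Gamma n) :
    sumChi n M q ≤ Multiset.card M := by
  induction M using Multiset.induction with
  | empty => exact le_refl 0
  | cons a S ih =>
    rw [sumChi_cons]
    have := chiS_le_one n a q
    simp only [Multiset.card_cons]
    omega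

lemma chiS_top_eq_one (n : ℕ) (hn : 2 ≤ n) (C : Finset (Fin (2*n))) (hC : C ∈ LSet n) :
    chiS n C ⟨(n+1, 1), topG_cond n hn⟩ = 1 := by
  have h := (mC_facts n hn C hC).2.2.2.2.2.2.2
  unfold chiS
  exact if_pos h

lemma pv_sumChi_top (n : ℕ) (hn : 2 ≤ n) (M : Multiset (Finset (Fin (2*n))))
    (HM : ∀ C ∈ M, C ∈ LSet n) :
    pv n (sumChi n M) (n+1) 1 = Multiset.card M := by
  rw [show pv n (sumChi n M) (n+1) 1 = sumChi n M ⟨(n+1,1), topG_cond n hn⟩ from dif_pos _]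
  unfold sumChi
  rw [Multiset.map_congr rfl (fun C hC => chiS_top_eq_one n hn C (HM C hC))]
  simp

lemma levels_zero (n : ℕ) : levelsM n (sumChi n 0) = 0 := by
  unfold levelsM
  rw [show pv n (sumChi n 0) (n+1) 1 = 0 from by unfold pv; split <;> rfl]
  rfl

lemma levels_of_chain (n : ℕ) (hn : 2 ≤ n) : ∀ (M : Multiset (Finset (Fin (2*n)))),
    (∀ C ∈ M, C ∈ LSet n) → (∀ u ∈ M, ∀ v ∈ M, le3 n u v ∨ le3 n v u) →
    levelsM n (sumChi n M) = M := by
  intro M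
  induction M using Multiset.strongInductionOn with
  | _ M IH =>
    intro HM hch
    by_cases hne : M = 0
    · subst hne
      exact levels_zero n
    · obtain ⟨u, hu, hmin⟩ := exists_min3 n M hne hch
      set E := M.erase u with hE
      have hME : M = u ::ₘ E := (Multiset.cons_erase hu).symm
      have hEsub : ∀ C ∈ E, C ∈ M := fun C hC => Multiset.mem_of_mem_erase hC
      have HME : ∀ C ∈ E, C ∈ LSet n := fun C hC => HM C (hEsub C hC)
      have hchE : ∀ x ∈ E, ∀ y ∈ E, le3 n x y ∨ le3 n y x :=
        fun x hx y hy => hch x (hEsub x hx) y (hEsub y hy)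
      have hTM := pv_sumChi_top n hn M HM
      have hTE := pv_sumChi_top n hn E HME
      have hcard : Multiset.card M = Multiset.card E + 1 := by rw [hME]; simp
      have hsplit : ∀ q, sumChi n M q = chiS n u q + sumChi n E q := by
        intro q
        conv_lhs => rw [hME]
        rw [sumChi_cons]
      have hall : ∀ q : Gamma n, chiS n u q = 1 → sumChi n E q = Multiset.card E := by
        intro q hq
        unfold sumChi
        rw [show (E.map (fun C => chiS n C q)) = E.map (fun _ => 1) from
          Multiset.map_congr rfl (fun C hC => by
            have h1 := chiS_le_of_le3 n u C (hmin C (hEsub C hC)) q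
            have h2 := chiS_le_one n C q
            omega)]
        simp
      have hcnt2 : ∀ r, r = n - 1 ∨ r = n ∨ r = n + 1 →
          cnt n (sumChi n M) r (Multiset.card E + 1) = mC n u r := by
        intro r hr
        have hmCu := mC_facts n hn u (HM u hu)
        unfold cnt
        have hterm : ∀ k ∈ Finset.range n,
            (if Multiset.card E + 1 ≤ pv n (sumChi n M) r (k+1) then 1 else 0 : ℕ)
              = if k + 1 ≤ mC n u r then 1 else 0 := by
          intro k hk
          rw [Finset.mem_range] at hk
          by_cases hv : GammaCond n (r, k+1)
          · rw [show pv n (sumChi n M) r (k+1) = sumChi n M ⟨(r, k+1), hv⟩ from dif_pos _]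
            have hchiu : chiS n u ⟨(r, k+1), hv⟩ = if k + 1 ≤ mC n u r then 1 else 0 := rfl
            have hsp := hsplit ⟨(r, k+1), hv⟩
            have hle := sumChi_le_card n E ⟨(r, k+1), hv⟩
            by_cases hcu : k + 1 ≤ mC n u r
            · have h1 : chiS n u ⟨(r, k+1), hv⟩ = 1 := by rw [hchiu, if_pos hcu]
              have h2 := hall _ h1
              rw [if_pos (by omega), if_pos hcu]
            · have h1 : chiS n u ⟨(r, k+1), hv⟩ = 0 := by rw [hchiu, if_neg hcu]
              rw [if_neg (by omega), if_neg hcu]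
          · rw [pv_zero_of_not n _ r (k+1) hv]
            have hbad : r = n - 1 ∧ n - 1 < k + 1 := by
              by_contra hcon
              apply hv
              refine ⟨hr, by omega, ?_⟩
              rcases hr with hr | hr | hr <;> omega
            rw [if_neg (by omega), if_neg (by rw [hbad.1]; omega)]
        rw [Finset.sum_congr rfl hterm, sum_ite_le]
        rcases hr with hr | hr | hr <;> rw [hr] <;> omega
      have hl2 : CofF n (sumChi n M) (Multiset.card E + 1) = u := by
        unfold CofF
        rw [hcnt2 (n-1) (Or.inl rfl), hcnt2 n (Or.inr (Or.inl rfl)),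
          hcnt2 (n+1) (Or.inr (Or.inr rfl))]
        exact Cof_tri n hn u (HM u hu)
      have hl3 : ∀ m, m + 1 ≤ Multiset.card E →
          CofF n (sumChi n M) (m+1) = CofF n (sumChi n E) (m+1) := by
        intro m hm
        have hcnt3 : ∀ r, cnt n (sumChi n M) r (m+1) = cnt n (sumChi n E) r (m+1) := by
          intro r
          unfold cnt
          refine Finset.sum_congr rfl (fun k _ => ?_)
          by_cases hv : GammaCond n (r, k+1)
          · rw [show pv n (sumChi n M) r (k+1) = sumChi n M ⟨(r, k+1), hv⟩ from dif_pos _,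
              show pv n (sumChi n E) r (k+1) = sumChi n E ⟨(r, k+1), hv⟩ from dif_pos _]
            have hsp := hsplit ⟨(r, k+1), hv⟩
            have h01 := chiS_le_one n u ⟨(r, k+1), hv⟩
            by_cases hcu : chiS n u ⟨(r, k+1), hv⟩ = 1
            · have h2 := hall _ hcu
              rw [if_pos (by omega), if_pos (by omega)]
            · have : chiS n u ⟨(r, k+1), hv⟩ = 0 := by omega
              rw [hsp, this]
              norm_num
          · rw [pv_zero_of_not n _ r (k+1) hv, pv_zero_of_not n _ r (k+1) hv]
        unfold CofF
        rw [hcnt3 (n-1), hcnt3 n, hcnt3 (n+1)]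
      unfold levelsM
      rw [hTM, hcard, Multiset.range_succ, Multiset.map_cons, hl2]
      have htail : (Multiset.range (Multiset.card E)).map
            (fun m => CofF n (sumChi n M) (m+1))
          = (Multiset.range (Multiset.card E)).map (fun m => CofF n (sumChi n E) (m+1)) :=
        Multiset.map_congr rfl (fun m hm => hl3 m (by
          rw [Multiset.mem_range] at hm
          omega))
      rw [htail]
      have hlev : (Multiset.range (Multiset.card E)).map
          (fun m => CofF n (sumChi n E) (m+1)) = levelsM n (sumChi n E) := by
        unfold levelsM
        rw [hTE]
      rw [hlev, IH E (Multiset.erase_lt.mpr hu) HME hchE, ← hME]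

/-- The class of the variable `z_C` in the Hibi algebra (or `1` if `C ∉ 𝓛`). -/
def zCl (n : ℕ) (C : Finset (Fin (2*n))) :
    MvPolynomial (↥(LSet n)) ℂ ⧸ Ideal.span (HibiGens n) :=
  @dite _ (C ∈ LSet n) (Classical.dec _)
    (fun h => Ideal.Quotient.mk _ (MvPolynomial.X ⟨C, h⟩)) (fun _ => 1)

/-- Product of the classes of the variables indexed by a multiset of column sets. -/
def prodM (n : ℕ) (M : Multiset (Finset (Fin (2*n)))) :
    MvPolynomial (↥(LSet n)) ℂ ⧸ Ideal.span (HibiGens n) :=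
  (M.map (zCl n)).prod

lemma prodM_cons (n : ℕ) (a : Finset (Fin (2*n))) (M : Multiset (Finset (Fin (2*n)))) :
    prodM n (a ::ₘ M) = zCl n a * prodM n M := by
  unfold prodM
  rw [Multiset.map_cons, Multiset.prod_cons]

lemma zCl_rel (n : ℕ) (hn : 2 ≤ n) (i : ℕ) (h1 : 1 ≤ i) (h2 : i ≤ n - 1) :
    zCl n (Iset n i) * zCl n (Kset n (i-1)) = zCl n (JPset n i) * zCl n (Jset n (i-1)) := by
  have hI := Iset_memL n i h1 h2
  have hK := Kset_memL n (i-1) (by omega)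
  have hJ' := JPset_memL n i h2
  have hJ := Jset_memL n (i-1) (by omega)
  unfold zCl
  rw [dif_pos hI, dif_pos hK, dif_pos hJ', dif_pos hJ, ← map_mul, ← map_mul]
  rw [Ideal.Quotient.eq]
  exact Ideal.subset_span ⟨i, h1, h2, hI, hK, hJ', hJ, rfl⟩

/-- The measure used in the straightening induction. -/
def wMu (n : ℕ) (C : Finset (Fin (2*n))) : ℕ := mC n C (n-1) * mC n C (n+1)

lemma wMu_vals (n : ℕ) (hn : 2 ≤ n) (i : ℕ) (h1 : 1 ≤ i) (h2 : i ≤ n - 1) :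
    wMu n (Iset n i) = i * i ∧ wMu n (Kset n (i-1)) = (i-1) * (i+1) ∧
    wMu n (JPset n i) = i * (i+1) ∧ wMu n (Jset n (i-1)) = (i-1) * i := by
  have eI1 : mC n (Iset n i) (n-1) = i := by rw [mC_Iset n i _ (by omega)]; omega
  have eI3 : mC n (Iset n i) (n+1) = i := by rw [mC_Iset n i _ (by omega)]; omega
  have eK1 : mC n (Kset n (i-1)) (n-1) = i - 1 := by
    rw [mC_Kset n (i-1) _ (by omega) (by omega)]; split_ifs <;> omega
  have eK3 : mC n (Kset n (i-1)) (n+1) = i + 1 := by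
    rw [mC_Kset n (i-1) _ (by omega) (by omega)]; split_ifs <;> omega
  have eJ'1 : mC n (JPset n i) (n-1) = i := by
    rw [mC_JPset n i _ (by omega) (by omega)]; split_ifs <;> omega
  have eJ'3 : mC n (JPset n i) (n+1) = i + 1 := by
    rw [mC_JPset n i _ (by omega) (by omega)]; split_ifs <;> omega
  have eJ1 : mC n (Jset n (i-1)) (n-1) = i - 1 := by
    rw [mC_Jset n (i-1) _ (by omega) (by omega)]; split_ifs <;> omega
  have eJ3 : mC n (Jset n (i-1)) (n+1) = i := by
    rw [mC_Jset n (i-1) _ (by omega) (by omega)]; split_ifs <;> omega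
  unfold wMu
  rw [eI1, eI3, eK1, eK3, eJ'1, eJ'3, eJ1, eJ3]
  exact ⟨rfl, rfl, rfl, rfl⟩

lemma wMu_id (i : ℕ) (h1 : 1 ≤ i) :
    i * i + (i-1) * (i+1) + 1 = i * (i+1) + (i-1) * i := by
  obtain ⟨j, rfl⟩ : ∃ j, i = j + 1 := ⟨i - 1, by omega⟩
  simp only [Nat.add_sub_cancel]
  ring

/-- Straightening: the product of any multiset of variables equals the product over
its canonical multichain decomposition, in the Hibi algebra. -/
lemma straighten (n : ℕ) (hn : 2 ≤ n) (N : ℕ) (hN : ∀ C ∈ LSet n, wMu n C + 1 ≤ N) :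
    ∀ (k : ℕ) (M : Multiset (Finset (Fin (2*n)))), (∀ C ∈ M, C ∈ LSet n) →
      (M.map (fun C => N - wMu n C)).sum ≤ k →
      prodM n M = prodM n (levelsM n (sumChi n M)) := by
  intro k
  induction k with
  | zero =>
    intro M HM hk
    have hM0 : M = 0 := by
      by_contra hne
      obtain ⟨a, ha⟩ := Multiset.exists_mem_of_ne_zero hne
      have h1 : N - wMu n a ∈ M.map (fun C => N - wMu n C) := Multiset.mem_map_of_mem _ ha
      have h2 := Multiset.single_le_sum (fun x _ => Nat.zero_le x) _ h1
      have h3 := hN a (HM a ha)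
      omega
    subst hM0
    rw [levels_zero n]
  | succ k IH =>
    intro M HM hk
    by_cases hch : ∀ u ∈ M, ∀ v ∈ M, le3 n u v ∨ le3 n v u
    · rw [levels_of_chain n hn M HM hch]
    · push_neg at hch
      obtain ⟨u, hu, v, hv, h1, h2⟩ := hch
      have hne' : v ≠ u := by
        rintro rfl
        exact h1 (le3_refl n v)
      have hv' : v ∈ M.erase u := (Multiset.mem_erase_of_ne hne').mpr hv
      set R := (M.erase u).erase v with hR
      have hM1 : M.erase u = v ::ₘ R := (Multiset.cons_erase hv').symm
      have hM2 : M = u ::ₘ v ::ₘ R := by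
        rw [← hM1, Multiset.cons_erase hu]
      obtain ⟨i, hi1, hi2, hcase⟩ := incomp_class n hn u v (HM u hu) (HM v hv) h1 h2
      have hM' : M = Iset n i ::ₘ Kset n (i-1) ::ₘ R := by
        rcases hcase with ⟨rfl, rfl⟩ | ⟨rfl, rfl⟩
        · exact hM2
        · rw [hM2, Multiset.cons_swap]
      set M₂ : Multiset (Finset (Fin (2*n))) := JPset n i ::ₘ Jset n (i-1) ::ₘ R with hM₂
      have hRsub : ∀ C ∈ R, C ∈ M := by
        intro C hC
        rw [hM']
        exact Multiset.mem_cons_of_mem (Multiset.mem_cons_of_mem hC)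
      have HM₂ : ∀ C ∈ M₂, C ∈ LSet n := by
        intro C hC
        rw [hM₂] at hC
        rcases Multiset.mem_cons.mp hC with rfl | hC
        · exact JPset_memL n i hi2
        · rcases Multiset.mem_cons.mp hC with rfl | hC
          · exact Jset_memL n (i-1) (by omega)
          · exact HM C (hRsub C hC)
      obtain ⟨eI, eK, eJ', eJ⟩ := wMu_vals n hn i hi1 hi2
      have hid := wMu_id i hi1
      have bI := hN _ (Iset_memL n i hi1 hi2)
      have bK := hN _ (Kset_memL n (i-1) (by omega))
      have bJ' := hN _ (JPset_memL n i hi2)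
      have bJ := hN _ (Jset_memL n (i-1) (by omega))
      have hmes : (M₂.map (fun C => N - wMu n C)).sum + 1
          = (M.map (fun C => N - wMu n C)).sum := by
        rw [hM', hM₂, Multiset.map_cons, Multiset.map_cons, Multiset.map_cons,
          Multiset.map_cons, Multiset.sum_cons, Multiset.sum_cons, Multiset.sum_cons,
          Multiset.sum_cons, eI, eK, eJ', eJ]
        omega
      have hprod : prodM n M = prodM n M₂ := by
        rw [hM', hM₂, prodM_cons, prodM_cons, prodM_cons, prodM_cons, ← mul_assoc,
          ← mul_assoc, zCl_rel n hn i hi1 hi2]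
      have hsum : sumChi n M = sumChi n M₂ := by
        funext q
        rw [hM', hM₂, sumChi_cons, sumChi_cons, sumChi_cons, sumChi_cons]
        have := congrFun (rel_chi n hn i hi1 hi2) q
        omega
      rw [hprod, hsum, IH M₂ HM₂ (by omega)]

/-- The forward homomorphism on the polynomial ring. -/
def fwd (n : ℕ) : MvPolynomial (↥(LSet n)) ℂ →ₐ[ℂ] AddMonoidAlgebra ℂ ↥(PGamma n) :=
  MvPolynomial.aeval (fun C : ↥(LSet n) => AddMonoidAlgebra.single (chiP n C.1) (1 : ℂ))

lemma chiP_rel (n : ℕ) (hn : 2 ≤ n) (i : ℕ) (h1 : 1 ≤ i) (h2 : i ≤ n - 1) :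
    chiP n (Iset n i) + chiP n (Kset n (i-1)) = chiP n (JPset n i) + chiP n (Jset n (i-1)) := by
  apply Subtype.ext
  have h := rel_chi n hn i h1 h2
  show chiS n (Iset n i) + chiS n (Kset n (i-1)) = chiS n (JPset n i) + chiS n (Jset n (i-1))
  funext q
  exact congrFun h q

lemma fwd_vanish (n : ℕ) (hn : 2 ≤ n) : ∀ a ∈ Ideal.span (HibiGens n), fwd n a = 0 := by
  intro a ha
  have hspan : Ideal.span (HibiGens n) ≤ RingHom.ker (fwd n).toRingHom := by
    rw [Ideal.span_le]
    intro p hp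
    obtain ⟨i, h1, h2, hI, hK, hJ', hJ, rfl⟩ := hp
    rw [SetLike.mem_coe, RingHom.mem_ker]
    show fwd n _ = 0
    rw [map_sub, map_mul, map_mul]
    unfold fwd
    rw [MvPolynomial.aeval_X, MvPolynomial.aeval_X, MvPolynomial.aeval_X, MvPolynomial.aeval_X,
      AddMonoidAlgebra.single_mul_single, AddMonoidAlgebra.single_mul_single, one_mul,
      chiP_rel n hn i h1 h2, sub_self]
  exact RingHom.mem_ker.mp (hspan ha)

/-- The forward isomorphism candidate on the Hibi algebra. -/
def phiH (n : ℕ) (hn : 2 ≤ n) :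
    (MvPolynomial (↥(LSet n)) ℂ ⧸ Ideal.span (HibiGens n)) →ₐ[ℂ]
      AddMonoidAlgebra ℂ ↥(PGamma n) :=
  Ideal.Quotient.liftₐ (Ideal.span (HibiGens n)) (fwd n) (fwd_vanish n hn)

lemma phiH_mk (n : ℕ) (hn : 2 ≤ n) (C : Finset (Fin (2*n))) (hC : C ∈ LSet n) :
    phiH n hn (Ideal.Quotient.mk (Ideal.span (HibiGens n)) (MvPolynomial.X ⟨C, hC⟩))
      = AddMonoidAlgebra.single (chiP n C) (1 : ℂ) := by
  unfold phiH
  show fwd n (MvPolynomial.X ⟨C, hC⟩) = _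
  unfold fwd
  rw [MvPolynomial.aeval_X]

/-- The sum of `χ` elements of `𝓟(Γ)` over a multiset. -/
def sumP (n : ℕ) (M : Multiset (Finset (Fin (2*n)))) : ↥(PGamma n) :=
  (M.map (fun C => chiP n C)).sum

lemma sumP_coe (n : ℕ) (M : Multiset (Finset (Fin (2*n)))) :
    ((sumP n M : ↥(PGamma n)) : Gamma n → ℕ) = sumChi n M := by
  induction M using Multiset.induction with
  | empty => rfl
  | cons a S ih =>
    unfold sumP at *
    rw [Multiset.map_cons, Multiset.sum_cons]
    funext q
    rw [sumChi_cons]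
    have : ((chiP n a + (S.map (fun C => chiP n C)).sum : ↥(PGamma n)) : Gamma n → ℕ)
        = (chiP n a : Gamma n → ℕ) + ((S.map (fun C => chiP n C)).sum : Gamma n → ℕ) := rfl
    rw [this]
    have := congrFun ih q
    simp only [Pi.add_apply]
    rw [this]
    rfl

lemma phiH_prodM (n : ℕ) (hn : 2 ≤ n) (M : Multiset (Finset (Fin (2*n))))
    (HM : ∀ C ∈ M, C ∈ LSet n) :
    phiH n hn (prodM n M) = AddMonoidAlgebra.single (sumP n M) (1 : ℂ) := by
  induction M using Multiset.induction with
  | empty =>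
    show phiH n hn 1 = _
    rw [map_one]
    rfl
  | cons a S ih =>
    have haL : a ∈ LSet n := HM a (Multiset.mem_cons_self a S)
    rw [prodM_cons, map_mul]
    rw [show zCl n a = Ideal.Quotient.mk (Ideal.span (HibiGens n)) (MvPolynomial.X ⟨a, haL⟩)
      from dif_pos haL]
    rw [phiH_mk n hn a haL, ih (fun C hC => HM C (Multiset.mem_cons_of_mem hC)),
      AddMonoidAlgebra.single_mul_single, one_mul]
    congr 1
    unfold sumP
    rw [Multiset.map_cons, Multiset.sum_cons]

lemma levels_memL (n : ℕ) (hn : 2 ≤ n) (p : Gamma n → ℕ)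
    (hp : ∀ x y, GammaLE n x y → p x ≤ p y) :
    ∀ C ∈ levelsM n p, C ∈ LSet n := by
  intro C hC
  unfold levelsM at hC
  obtain ⟨m, hm, rfl⟩ := Multiset.mem_map.mp hC
  rw [Multiset.mem_range] at hm
  exact CofF_memL n hn p hp (m+1) (by omega) (by omega)

lemma sumChi_add (n : ℕ) (A B : Multiset (Finset (Fin (2*n)))) (q : Gamma n) :
    sumChi n (A + B) q = sumChi n A q + sumChi n B q := by
  unfold sumChi
  rw [Multiset.map_add, Multiset.sum_add]

lemma hN_bound (n : ℕ) (hn : 2 ≤ n) :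
    ∀ C ∈ LSet n, wMu n C + 1 ≤ (n-1) * n + 1 := by
  intro C hC
  obtain ⟨f1, f2, f3, f4, f5, f6, f7, f8⟩ := mC_facts n hn C hC
  have : wMu n C ≤ (n-1) * n := Nat.mul_le_mul f5 f7
  omega

/-- The inverse monoid homomorphism `𝓟(Γ) → 𝓗`. -/
def psi0 (n : ℕ) (hn : 2 ≤ n) :
    Multiplicative ↥(PGamma n) →*
      (MvPolynomial (↥(LSet n)) ℂ ⧸ Ideal.span (HibiGens n)) where
  toFun := fun p => prodM n (levelsM n ((Multiplicative.toAdd p : ↥(PGamma n)) : Gamma n → ℕ))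
  map_one' := by
    show prodM n (levelsM n ((Multiplicative.toAdd (1 : Multiplicative ↥(PGamma n))
      : ↥(PGamma n)) : Gamma n → ℕ)) = 1
    have h0 : ((Multiplicative.toAdd (1 : Multiplicative ↥(PGamma n)) : ↥(PGamma n))
        : Gamma n → ℕ) = sumChi n 0 := rfl
    rw [h0, levels_zero n]
    rfl
  map_mul' := by
    intro p q
    show prodM n (levelsM n ((Multiplicative.toAdd (p * q) : ↥(PGamma n)) : Gamma n → ℕ))
      = prodM n (levelsM n ((Multiplicative.toAdd p : ↥(PGamma n)) : Gamma n → ℕ))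
        * prodM n (levelsM n ((Multiplicative.toAdd q : ↥(PGamma n)) : Gamma n → ℕ))
    set pf := ((Multiplicative.toAdd p : ↥(PGamma n)) : Gamma n → ℕ) with hpf
    set qf := ((Multiplicative.toAdd q : ↥(PGamma n)) : Gamma n → ℕ) with hqf
    have hpmono : ∀ x y, GammaLE n x y → pf x ≤ pf y := (Multiplicative.toAdd p).2
    have hqmono : ∀ x y, GammaLE n x y → qf x ≤ qf y := (Multiplicative.toAdd q).2
    have hco : ((Multiplicative.toAdd (p * q) : ↥(PGamma n)) : Gamma n → ℕ) = pf + qf := rfl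
    rw [hco]
    set Mtot := levelsM n pf + levelsM n qf with hMtot
    have HMt : ∀ C ∈ Mtot, C ∈ LSet n := by
      intro C hC
      rw [hMtot, Multiset.mem_add] at hC
      rcases hC with hC | hC
      · exact levels_memL n hn pf hpmono C hC
      · exact levels_memL n hn qf hqmono C hC
    have hsum : sumChi n Mtot = pf + qf := by
      funext x
      rw [hMtot, sumChi_add, sumChi_levelsM n hn pf hpmono, sumChi_levelsM n hn qf hqmono]
      rfl
    have hstr := straighten n hn ((n-1) * n + 1) (hN_bound n hn)
      ((Mtot.map (fun C => (n-1) * n + 1 - wMu n C)).sum) Mtot HMt (le_refl _)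
    rw [hsum] at hstr
    rw [← hstr]
    unfold prodM
    rw [hMtot, Multiset.map_add, Multiset.prod_add]

/-- The inverse algebra homomorphism. -/
def psiH (n : ℕ) (hn : 2 ≤ n) :
    AddMonoidAlgebra ℂ ↥(PGamma n) →ₐ[ℂ]
      (MvPolynomial (↥(LSet n)) ℂ ⧸ Ideal.span (HibiGens n)) :=
  AddMonoidAlgebra.lift ℂ _ ↥(PGamma n) (psi0 n hn)

lemma psiH_single (n : ℕ) (hn : 2 ≤ n) (p : ↥(PGamma n)) :
    psiH n hn (AddMonoidAlgebra.single p (1 : ℂ))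
      = prodM n (levelsM n (p : Gamma n → ℕ)) := by
  unfold psiH
  rw [AddMonoidAlgebra.lift_single, one_smul]
  rfl

lemma phi_psi (n : ℕ) (hn : 2 ≤ n) :
    (phiH n hn).comp (psiH n hn) = AlgHom.id ℂ (AddMonoidAlgebra ℂ ↥(PGamma n)) := by
  apply AddMonoidAlgebra.algHom_ext ?_ (Subsingleton.elim _ _)
  intro p
  rw [AlgHom.comp_apply, psiH_single, AlgHom.id_apply]
  have hp : ∀ x y, GammaLE n x y → (p : Gamma n → ℕ) x ≤ (p : Gamma n → ℕ) y := p.2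
  rw [phiH_prodM n hn _ (levels_memL n hn _ hp)]
  congr 1
  apply Subtype.ext
  rw [sumP_coe, sumChi_levelsM n hn _ hp]

lemma psi_phi (n : ℕ) (hn : 2 ≤ n) :
    (psiH n hn).comp (phiH n hn)
      = AlgHom.id ℂ (MvPolynomial (↥(LSet n)) ℂ ⧸ Ideal.span (HibiGens n)) := by
  apply Ideal.Quotient.algHom_ext
  apply MvPolynomial.algHom_ext
  intro C
  rw [AlgHom.comp_apply, AlgHom.comp_apply, AlgHom.comp_apply, Ideal.Quotient.mkₐ_eq_mk,
    AlgHom.id_apply]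
  have hXC : (MvPolynomial.X C : MvPolynomial (↥(LSet n)) ℂ) = MvPolynomial.X ⟨C.1, C.2⟩ := rfl
  rw [hXC, phiH_mk n hn C.1 C.2, psiH_single]
  have hcoe : ((chiP n C.1 : ↥(PGamma n)) : Gamma n → ℕ) = chiS n C.1 := rfl
  rw [hcoe]
  have hsing : chiS n C.1 = sumChi n ((C.1 : Finset (Fin (2*n))) ::ₘ 0) := by
    funext q
    rw [sumChi_cons]
    show chiS n C.1 q = chiS n C.1 q + 0
    omega
  rw [hsing, levels_of_chain n hn _ (by
      intro D hD
      rcases Multiset.mem_cons.mp hD with rfl | hD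
      · exact C.2
      · exact absurd hD (by simp)) (by
      intro u hu v hv
      rcases Multiset.mem_cons.mp hu with rfl | hu
      · rcases Multiset.mem_cons.mp hv with rfl | hv
        · exact Or.inl (le3_refl n _)
        · exact absurd hv (by simp)
      · exact absurd hu (by simp))]
  rw [prodM_cons]
  show zCl n C.1 * prodM n 0 = _
  have h0 : prodM n 0 = 1 := rfl
  rw [h0, mul_one, show zCl n C.1
    = Ideal.Quotient.mk (Ideal.span (HibiGens n)) (MvPolynomial.X ⟨C.1, C.2⟩) from dif_pos C.2]

theorem stmt13 (n : ℕ) (hn : 2 ≤ n) :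
    ∃ φ : (MvPolynomial (↥(LSet n)) ℂ ⧸ Ideal.span (HibiGens n)) ≃ₐ[ℂ]
        AddMonoidAlgebra ℂ ↥(PGamma n),
      ∀ (C : Finset (Fin (2*n))) (hC : C ∈ LSet n) (p : ↥(PGamma n)),
        (p : Gamma n → ℕ) = chiS n C →
        φ (Ideal.Quotient.mk (Ideal.span (HibiGens n)) (MvPolynomial.X ⟨C, hC⟩)) =
          AddMonoidAlgebra.single p (1 : ℂ) := by
  refine ⟨AlgEquiv.ofAlgHom (phiH n hn) (psiH n hn) (phi_psi n hn) (psi_phi n hn), ?_⟩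
  intro C hC p hp
  show phiH n hn (Ideal.Quotient.mk (Ideal.span (HibiGens n)) (MvPolynomial.X ⟨C, hC⟩))
    = AddMonoidAlgebra.single p (1 : ℂ)
  rw [phiH_mk n hn C hC]
  congr 1
  exact Subtype.ext hp.symm

end SpBranch
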